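/- Let a be an odd natural number. Then Σ_{j=0}^{a} Σ_{i=1}^{n} (1/n^a) · binomial(a,j) · (−1)^j · n^j · (i − 1/2)^{a−j} · i^{\overline{j}} / (n+1)^{\overline{j}} = O(1/n^{(a−1)/2}) as n → ∞. -/

import Mathlib

/-!
For `p` Beta-distributed with parameters `(x, c - x)` one has `E[p^j] = x^{(j)} / c^{(j)}`, so the
inner sum over `j` is `E[(x - 1/2 - n p)^a]` for `c = n + 1`. The symmetry `p ↦ 1 - p` exchanges
`x` and `n + 1 - x`, and for odd `a` it turns this moment into minus the one at `n + 1 - x`.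
Hence the sum over `i ∈ [1, n]` vanishes identically, pairing `i` with `n + 1 - i`.
Formally, the Beta symmetry is a polynomial identity in `A, t, x, c`, proved by induction on `a`
through a contiguous relation.
-/

open Filter Asymptotics Finset

/-- Rising factorial `x^{\overline{k}} = x(x+1)⋯(x+k-1)`. -/
noncomputable def risingFac (x : ℝ) (k : ℕ) : ℝ := ∏ j ∈ Finset.range k, (x + j)

lemma risingFac_succ (x : ℝ) (k : ℕ) : risingFac x (k + 1) = risingFac x k * (x + k) :=
  prod_range_succ _ _

lemma mul_risingFac_add_one (x : ℝ) (k : ℕ) :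
    x * risingFac (x + 1) k = risingFac x (k + 1) := by
  rw [risingFac, risingFac, prod_range_succ', Nat.cast_zero, add_zero, mul_comm]
  congr 1
  refine prod_congr rfl fun i _ => ?_
  push_cast
  ring

lemma risingFac_add (x : ℝ) (j m : ℕ) :
    risingFac x (j + m) = risingFac x j * risingFac (x + j) m := by
  rw [risingFac, prod_range_add]
  congr 1
  refine prod_congr rfl fun i _ => ?_
  push_cast
  ring

lemma risingFac_pos {x : ℝ} (hx : 0 < x) (k : ℕ) : 0 < risingFac x k :=
  prod_pos fun j _ => add_pos_of_pos_of_nonneg hx j.cast_nonneg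

/-- `c^{(m)} E[(A + t p)^m]` for `p` Beta-distributed with parameters `(x, c - x)`, cleared of
denominators. -/
noncomputable def scaledBetaMoment (m : ℕ) (A t x c : ℝ) : ℝ :=
  ∑ j ∈ range (m + 1),
    (m.choose j : ℝ) * (A ^ (m - j) * t ^ j * risingFac x j * risingFac (c + j) (m - j))

lemma scaledBetaMoment_succ (m : ℕ) (A t x c : ℝ) :
    scaledBetaMoment (m + 1) A t x c =
      A * (c + m) * scaledBetaMoment m A t x c +
        t * x * scaledBetaMoment m A t (x + 1) (c + 1) := by
  rw [scaledBetaMoment, Finset.sum_choose_succ_mul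
    (fun j k => A ^ k * t ^ j * risingFac x j * risingFac (c + j) k), scaledBetaMoment,
    scaledBetaMoment, mul_sum, mul_sum]
  congr 1 <;> refine sum_congr rfl fun j hj => ?_
  · have hjm : j ≤ m := Nat.lt_succ_iff.mp (mem_range.mp hj)
    rw [Nat.sub_add_comm hjm, pow_succ, risingFac_succ, Nat.cast_sub hjm]
    ring
  · rw [← mul_risingFac_add_one, pow_succ, Nat.cast_succ,
      show c + (j + 1 : ℝ) = c + 1 + j by ring]
    ring

lemma scaledBetaMoment_contiguous (m : ℕ) (A t x c : ℝ) :
    x * scaledBetaMoment m A t (x + 1) (c + 1) + (c - x) * scaledBetaMoment m A t x (c + 1) =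
      (c + m) * scaledBetaMoment m A t x c := by
  simp only [scaledBetaMoment, mul_sum, ← sum_add_distrib]
  refine sum_congr rfl fun j hj => ?_
  have hjm : j ≤ m := Nat.lt_succ_iff.mp (mem_range.mp hj)
  have hx : x * risingFac (x + 1) j = risingFac x j * (x + j) := by
    rw [mul_risingFac_add_one, risingFac_succ]
  have hc : (c + j) * risingFac (c + j + 1) (m - j) = risingFac (c + j) (m - j) * (c + m) := by
    rw [mul_risingFac_add_one, risingFac_succ, Nat.cast_sub hjm]
    ring
  rw [show c + 1 + (j : ℝ) = c + j + 1 by ring]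
  linear_combination ((m.choose j : ℝ) * A ^ (m - j) * t ^ j * risingFac (c + j + 1) (m - j)) * hx
    + ((m.choose j : ℝ) * A ^ (m - j) * t ^ j * risingFac x j) * hc

theorem scaledBetaMoment_reflect (m : ℕ) (A t x c : ℝ) :
    scaledBetaMoment m A t x c = scaledBetaMoment m (A + t) (-t) (c - x) c := by
  induction m generalizing c with
  | zero => simp [scaledBetaMoment, risingFac]
  | succ m ih =>
    rw [scaledBetaMoment_succ, scaledBetaMoment_succ, ← ih, show c - x + 1 = c + 1 - x by ring,
      ← ih]
    linear_combination t * scaledBetaMoment_contiguous m A t x c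

lemma scaledBetaMoment_neg (m : ℕ) (A t x c : ℝ) :
    scaledBetaMoment m (-A) (-t) x c = (-1) ^ m * scaledBetaMoment m A t x c := by
  rw [scaledBetaMoment, scaledBetaMoment, mul_sum]
  refine sum_congr rfl fun j hj => ?_
  have hjm : j ≤ m := Nat.lt_succ_iff.mp (mem_range.mp hj)
  rw [neg_pow A, neg_pow t, ← Nat.sub_add_cancel hjm, pow_add, Nat.add_sub_cancel]
  ring

lemma sum_choose_mul_risingFac_div (m : ℕ) (A t x : ℝ) {c : ℝ} (hc : 0 < c) :
    ∑ j ∈ range (m + 1),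
        (m.choose j : ℝ) * A ^ (m - j) * t ^ j * risingFac x j / risingFac c j =
      scaledBetaMoment m A t x c / risingFac c m := by
  rw [scaledBetaMoment, sum_div]
  refine sum_congr rfl fun j hj => ?_
  have hjm : j ≤ m := Nat.lt_succ_iff.mp (mem_range.mp hj)
  have hcj : 0 < c + j := by positivity
  rw [← Nat.add_sub_cancel' hjm, risingFac_add, Nat.add_sub_cancel_left]
  field_simp [(risingFac_pos hc j).ne', (risingFac_pos hcj (m - j)).ne']

/-- The inner sum of the theorem, at `n = ν` and `i = x`. -/
noncomputable def centeredSum (a : ℕ) (ν x : ℝ) : ℝ :=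
  ∑ j ∈ range (a + 1), (a.choose j : ℝ) * (-1) ^ j * ν ^ j * (x - 1 / 2) ^ (a - j) *
    risingFac x j / risingFac (ν + 1) j

lemma centeredSum_eq {a : ℕ} {ν : ℝ} (hν : 0 < ν + 1) (x : ℝ) :
    centeredSum a ν x =
      scaledBetaMoment a (x - 1 / 2) (-ν) x (ν + 1) / risingFac (ν + 1) a := by
  rw [← sum_choose_mul_risingFac_div _ _ _ _ hν, centeredSum]
  refine sum_congr rfl fun j _ => ?_
  rw [neg_pow ν]
  ring

theorem centeredSum_reflect {a : ℕ} (ha : Odd a) {ν : ℝ} (hν : 0 < ν + 1) (x : ℝ) :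
    centeredSum a ν (ν + 1 - x) = -centeredSum a ν x := by
  rw [centeredSum_eq hν, centeredSum_eq hν, scaledBetaMoment_reflect a (x - 1 / 2),
    show x - 1 / 2 + -ν = -(ν + 1 - x - 1 / 2) by ring, scaledBetaMoment_neg,
    ha.neg_one_pow, neg_one_mul, neg_div, neg_neg]

lemma sum_Icc_eq_zero_of_reflect {M : Type*} [AddCommGroup M] [IsAddTorsionFree M]
    {n : ℕ} {f : ℕ → M} (hf : ∀ i ∈ Icc 1 n, f (n + 1 - i) = -f i) :
    ∑ i ∈ Icc 1 n, f i = 0 := by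
  refine sum_involution (fun i _ => n + 1 - i) (fun i hi => by rw [hf i hi, add_neg_cancel])
    (fun i hi hfi hfix => hfi (self_eq_neg.mp (by simpa only [hfix] using hf i hi)))
    (fun i hi => ?_) (fun i hi => ?_) <;> grind

theorem stmt_9 (a : ℕ) (ha : Odd a) :
    (fun n : ℕ => ∑ j ∈ Finset.range (a + 1), ∑ i ∈ Finset.Icc 1 n,
        (1 / (n : ℝ) ^ a) * (a.choose j : ℝ) * (-1) ^ j * (n : ℝ) ^ j
          * ((i : ℝ) - 1 / 2) ^ (a - j) * risingFac (i : ℝ) j / risingFac ((n : ℝ) + 1) j)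
      =O[atTop] (fun n : ℕ => 1 / (n : ℝ) ^ ((a - 1) / 2)) := by
  suffices hzero : ∀ n : ℕ, ∑ j ∈ range (a + 1), ∑ i ∈ Icc 1 n,
      (1 / (n : ℝ) ^ a) * (a.choose j : ℝ) * (-1) ^ j * (n : ℝ) ^ j
        * ((i : ℝ) - 1 / 2) ^ (a - j) * risingFac (i : ℝ) j / risingFac ((n : ℝ) + 1) j = 0 by
    simp only [hzero]
    exact isBigO_zero _ _
  intro n
  have hn : (0 : ℝ) < n + 1 := by positivity
  have hreflect :
      ∀ i ∈ Icc 1 n, centeredSum a n ((n + 1 - i : ℕ) : ℝ) = -centeredSum a n i := by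
    intro i hi
    rw [Nat.cast_sub (by grind), Nat.cast_add_one, centeredSum_reflect ha hn]
  calc _ = 1 / (n : ℝ) ^ a * ∑ i ∈ Icc 1 n, centeredSum a n i := by
        simp only [sum_comm (s := range (a + 1)), centeredSum, mul_sum, mul_div_assoc, mul_assoc]
    _ = 0 := by rw [sum_Icc_eq_zero_of_reflect hreflect, mul_zero]
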